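/- arXiv:2306.13570 — 4 statements merged into one kernel-verified Lean document; each statement's English description precedes it below -/
import Mathlib

section
/- Let J ∈ ℝ^{n×n} be in Jordan normal form with distinct real eigenvalues λ_1,…,λ_l, where λ_i has α_i Jordan blocks of sizes r_{i1},…,r_{iα_i}, and let B̂ ∈ ℝ^{n×m}. Then the pair (J, B̂) is completely controllable (the span of the columns of [B̂, JB̂, …, J^{n−1}B̂] is all of ℝ^n) if and only if for every i = 1,…,l the α_i rows b_{ri1},…,b_{riα_i} of B̂ (the rows of B̂ aligned with the last row of each Jordan block of λ_i) are linearly independent. -/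
open Matrix

/-- A single real Jordan block of size `s` with eigenvalue `lam`:
`lam` on the diagonal, `1` on the superdiagonal, `0` elsewhere. -/
def jordanBlock (lam : ℝ) (s : ℕ) : Matrix (Fin s) (Fin s) ℝ :=
  Matrix.of fun a b => if (b : ℕ) = (a : ℕ) then lam
    else if (b : ℕ) = (a : ℕ) + 1 then 1 else 0

/-- Index type for a Jordan matrix: eigenvalue index `i` (of `l` eigenvalues),
block index `k` (of the `α i` blocks of the `i`-th eigenvalue), and a position
inside the block of size `r i k`. -/
abbrev JIdx (l : ℕ) (α : Fin l → ℕ) (r : (i : Fin l) → Fin (α i) → ℕ) : Type :=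
  (p : (i : Fin l) × Fin (α i)) × Fin (r p.1 p.2)

/-- The Jordan normal form matrix: block-diagonal direct sum of the Jordan blocks
`J_k(λ_i)` of sizes `r i k`. -/
def jordanMatrix (l : ℕ) (lam : Fin l → ℝ) (α : Fin l → ℕ)
    (r : (i : Fin l) → Fin (α i) → ℕ) :
    Matrix (JIdx l α r) (JIdx l α r) ℝ :=
  Matrix.blockDiagonal' fun p => jordanBlock (lam p.1) (r p.1 p.2)

/-- The controllable subspace of the pair `(J, B)`: the span of the columns of the
controllability matrix `[B, JB, …, J^{n-1}B]`, where `n` is the state dimension. -/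
noncomputable def ctrlSubspace {ι : Type} [Fintype ι] [DecidableEq ι] {m : ℕ}
    (J : Matrix ι ι ℝ) (B : Matrix ι (Fin m) ℝ) : Submodule ℝ (ι → ℝ) :=
  ⨆ j ∈ Finset.range (Fintype.card ι), LinearMap.range (J ^ j * B).mulVecLin

/-- The row `b_{rik}` of `Bhat` aligned with the last row of the Jordan block
`J_k(λ_i)`. -/
def lastRow {l : ℕ} {α : Fin l → ℕ} {r : (i : Fin l) → Fin (α i) → ℕ}
    (hr : ∀ i k, 0 < r i k) {m : ℕ} (Bhat : Matrix (JIdx l α r) (Fin m) ℝ)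
    (i : Fin l) (k : Fin (α i)) : Fin m → ℝ :=
  fun c => Bhat ⟨⟨i, k⟩, ⟨r i k - 1, Nat.sub_lt (hr i k) Nat.one_pos⟩⟩ c

/-!
`(J, B)` fails to be controllable exactly when some nonzero row vector `w` kills every `J ^ j * B`
(by Cayley–Hamilton it does not matter whether `j` ranges over `j < n` or over all of `ℕ`). These
`w` form a subspace that is invariant under right multiplication by `J`; since the characteristic
polynomial of `J` splits over `ℝ`, a nonzero such subspace contains a left eigenvector of `J`.
The left eigenvectors of `J` for `λ_i` are supported on the last positions of the Jordan blocks of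
`λ_i`, and for such a `w` the product `w B` is the combination `∑ₖ w_{ik} b_{rik}` of the rows
`b_{rik}`. Conversely every such combination is a left eigenvector. Hence a nonzero `w` exists
iff for some `i` the rows `b_{ri1}, …, b_{riα_i}` are linearly dependent.
-/

open Polynomial

namespace Module.End

variable {K V : Type*} [Field K] [AddCommGroup V] [Module K V]

theorem exists_hasEigenvector_mem_of_aeval_apply_eq_zero {f : End K V} {W : Submodule K V}
    (hW : ∀ v ∈ W, f v ∈ W) (s : Multiset K) {v : V} (hvW : v ∈ W) (hv : v ≠ 0)
    (hs : aeval f (s.map fun μ => X - C μ).prod v = 0) :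
    ∃ μ, ∃ w ∈ W, f.HasEigenvector μ w := by
  induction s using Multiset.induction_on generalizing v with
  | empty => simp_all
  | cons μ s ih =>
    set u := f v - μ • v
    have hu : aeval f (s.map fun μ => X - C μ).prod u = 0 := by
      rw [Multiset.map_cons, Multiset.prod_cons, mul_comm, map_mul, Module.End.mul_apply] at hs
      simpa [u, Algebra.algebraMap_eq_smul_one] using hs
    by_cases hu0 : u = 0
    · exact ⟨μ, v, hvW, mem_eigenspace_iff.mpr (sub_eq_zero.mp hu0), hv⟩
    · exact ih (W.sub_mem (hW v hvW) (W.smul_mem μ hvW)) hu0 hu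

end Module.End

theorem Submodule.eq_top_iff_forall_dotProduct_eq_zero {K ι : Type*} [Field K] [Fintype ι]
    [DecidableEq ι] (S : Submodule K (ι → K)) :
    S = ⊤ ↔ ∀ v : ι → K, (∀ x ∈ S, v ⬝ᵥ x = 0) → v = 0 := by
  rw [← Submodule.dualAnnihilator_eq_bot_iff, Submodule.eq_bot_iff,
    (dotProductEquiv K ι).surjective.forall]
  simp [Submodule.mem_dualAnnihilator]

namespace Matrix

theorem vecMul_pow_eq_pow_smul {R ι : Type*} [CommSemiring R] [Fintype ι] [DecidableEq ι]
    {A : Matrix ι ι R} {w : ι → R} {μ : R} (hw : w ᵥ* A = μ • w) (j : ℕ) :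
    w ᵥ* A ^ j = μ ^ j • w := by
  induction j with
  | zero => simp
  | succ j ih => rw [pow_succ, ← vecMul_vecMul, ih, smul_vecMul, hw, smul_smul, pow_succ]

theorem vecMul_pow_mul_eq_zero_of_forall_lt_card {R ι κ : Type*} [CommRing R] [Nontrivial R]
    [Fintype ι] [DecidableEq ι] {A : Matrix ι ι R} {B : Matrix ι κ R} {v : ι → R}
    (h : ∀ j < Fintype.card ι, v ᵥ* (A ^ j * B) = 0) (j : ℕ) :
    v ᵥ* (A ^ j * B) = 0 := by
  rcases isEmpty_or_nonempty ι with _ | _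
  · ext; simp [vecMul, dotProduct]
  have hdeg : (X ^ j %ₘ A.charpoly).natDegree < Fintype.card ι := by
    rw [← A.charpoly_natDegree_eq_dim]
    refine natDegree_modByMonic_lt _ A.charpoly_monic fun h1 => ?_
    exact Fintype.card_ne_zero (α := ι) (by simpa [h1] using A.charpoly_natDegree_eq_dim.symm)
  rw [pow_eq_aeval_mod_charpoly, aeval_eq_sum_range' hdeg, Matrix.sum_mul, vecMul_sum]
  refine Finset.sum_eq_zero fun i hi => ?_
  rw [Matrix.smul_mul, vecMul_smul, h i (Finset.mem_range.mp hi), smul_zero]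

theorem exists_mulVec_eq_smul_mem_of_aeval_eq_zero {K ι : Type*} [Field K] [Fintype ι]
    [DecidableEq ι] {A : Matrix ι ι K} {p : K[X]}
    (hm : p.Monic) (hs : p.Splits) (hA : aeval A p = 0) {W : Submodule K (ι → K)}
    (hW : ∀ v ∈ W, A *ᵥ v ∈ W) (hW0 : W ≠ ⊥) : ∃ μ : K, ∃ w ∈ W, w ≠ 0 ∧ A *ᵥ w = μ • w := by
  obtain ⟨v, hvW, hv⟩ := W.ne_bot_iff.mp hW0
  obtain ⟨μ, w, hwW, hw⟩ := Module.End.exists_hasEigenvector_mem_of_aeval_apply_eq_zero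
    (f := toLinAlgEquiv' A) hW p.roots hvW hv
    (by rw [← hs.eq_prod_roots_of_monic hm, aeval_algHom_apply, hA, map_zero, LinearMap.zero_apply])
  exact ⟨μ, w, hwW, hw.2, hw.apply_eq_smul⟩

section BlockDiagonal

variable {o R : Type*} {m' : o → Type*} [Fintype o] [DecidableEq o] [∀ k, Fintype (m' k)]

theorem vecMul_blockDiagonal'_apply [NonUnitalNonAssocSemiring R]
    (M : ∀ k, Matrix (m' k) (m' k) R) (w : (Σ k, m' k) → R) (k : o) (j : m' k) :
    (w ᵥ* blockDiagonal' M) ⟨k, j⟩ = ((fun i => w ⟨k, i⟩) ᵥ* M k) j := by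
  simp only [vecMul, dotProduct, Fintype.sum_sigma]
  rw [Finset.sum_eq_single k]
  · simp [blockDiagonal'_apply_eq]
  · intro k' _ hk'
    simp [blockDiagonal'_apply_ne M _ _ hk']
  · simp

variable [∀ k, DecidableEq (m' k)]

theorem aeval_blockDiagonal' [CommSemiring R] (M : ∀ k, Matrix (m' k) (m' k) R) (p : R[X]) :
    aeval (blockDiagonal' M) p = blockDiagonal' fun k => aeval (M k) p := by
  induction p using Polynomial.induction_on' with
  | add p q hp hq => simp only [map_add, hp, hq, ← blockDiagonal'_add]; rfl
  | monomial n a =>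
    simp only [aeval_monomial, ← blockDiagonal'_pow, Algebra.algebraMap_eq_smul_one,
      smul_mul_assoc, one_mul, ← blockDiagonal'_smul]
    rfl

theorem aeval_blockDiagonal'_prod_charpoly [CommRing R] (M : ∀ k, Matrix (m' k) (m' k) R) :
    aeval (blockDiagonal' M) (∏ k, (M k).charpoly) = 0 := by
  rw [aeval_blockDiagonal', ← blockDiagonal'_zero]
  congr 1
  funext k
  exact aeval_eq_zero_of_dvd_aeval_eq_zero (Finset.dvd_prod_of_mem _ (Finset.mem_univ k))
    (aeval_self_charpoly (M k))

end BlockDiagonal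

end Matrix

section Controllability

variable {ι : Type} [Fintype ι] [DecidableEq ι] {m : ℕ}

def ctrlLeftKernel (J : Matrix ι ι ℝ) (B : Matrix ι (Fin m) ℝ) : Submodule ℝ (ι → ℝ) :=
  ⨅ j : ℕ, LinearMap.ker (J ^ j * B).vecMulLinear

variable {J : Matrix ι ι ℝ} {B : Matrix ι (Fin m) ℝ}

theorem mem_ctrlLeftKernel {v : ι → ℝ} : v ∈ ctrlLeftKernel J B ↔ ∀ j, v ᵥ* (J ^ j * B) = 0 := by
  simp [ctrlLeftKernel]

theorem vecMul_mem_ctrlLeftKernel {v : ι → ℝ} (hv : v ∈ ctrlLeftKernel J B) :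
    v ᵥ* J ∈ ctrlLeftKernel J B := by
  rw [mem_ctrlLeftKernel] at hv ⊢
  intro j
  rw [vecMul_vecMul, ← Matrix.mul_assoc, ← pow_succ', hv]

theorem ctrlSubspace_eq_top_iff : ctrlSubspace J B = ⊤ ↔ ctrlLeftKernel J B = ⊥ := by
  rw [Submodule.eq_top_iff_forall_dotProduct_eq_zero, Submodule.eq_bot_iff]
  refine forall_congr' fun v => imp_congr_left ?_
  have : (∀ x ∈ ctrlSubspace J B, v ⬝ᵥ x = 0) ↔ ∀ j < Fintype.card ι, v ᵥ* (J ^ j * B) = 0 := by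
    change ctrlSubspace J B ≤ LinearMap.ker (dotProductEquiv ℝ ι v) ↔ _
    simp only [ctrlSubspace, iSup₂_le_iff, Finset.mem_range, LinearMap.range_le_ker_iff,
      LinearMap.ext_iff, LinearMap.comp_apply, dotProductEquiv_apply_apply, mulVecLin_apply,
      dotProduct_mulVec, LinearMap.zero_apply, dotProduct_eq_zero_iff]
  rw [this, mem_ctrlLeftKernel]
  exact ⟨fun h => vecMul_pow_mul_eq_zero_of_forall_lt_card h, fun h j _ => h j⟩

end Controllability

section JordanBlock

theorem jordanBlock_isUpperTriangular (lam : ℝ) (s : ℕ) :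
    (jordanBlock lam s).IsUpperTriangular := by
  intro a b hab
  have : (b : ℕ) < a := hab
  simp only [jordanBlock, of_apply]
  split_ifs <;> first | rfl | omega

theorem charpoly_jordanBlock (lam : ℝ) (s : ℕ) :
    (jordanBlock lam s).charpoly = (X - C lam) ^ s := by
  rw [charpoly_of_isUpperTriangular _ (jordanBlock_isUpperTriangular lam s)]
  simp [jordanBlock]

variable {lam : ℝ} {s : ℕ} (v : Fin s → ℝ)

theorem vecMul_jordanBlock_apply_of_val_eq_zero {b : Fin s} (hb : (b : ℕ) = 0) :
    (v ᵥ* jordanBlock lam s) b = lam * v b := by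
  simp only [vecMul, dotProduct, jordanBlock, of_apply]
  rw [Finset.sum_eq_single b]
  · simp [mul_comm]
  · intro a _ hab
    have : (b : ℕ) ≠ a := fun h => hab (Fin.ext h.symm)
    rw [if_neg this, if_neg (by omega), mul_zero]
  · simp

theorem vecMul_jordanBlock_apply_of_val_eq_succ {a b : Fin s} (hab : (b : ℕ) = a + 1) :
    (v ᵥ* jordanBlock lam s) b = lam * v b + v a := by
  simp only [vecMul, dotProduct, jordanBlock, of_apply]
  rw [Fintype.sum_eq_add b a (fun h => by simp [h] at hab)]
  · simp [hab, mul_comm]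
  · rintro c ⟨hcb, hca⟩
    have h1 : (b : ℕ) ≠ c := fun h => hcb (Fin.ext h.symm)
    have h2 : (b : ℕ) ≠ c + 1 := fun h => hca (Fin.ext (by omega))
    simp [h1, h2]

theorem eq_and_val_add_one_eq_of_vecMul_jordanBlock_eq_smul {μ : ℝ}
    (hv : v ᵥ* jordanBlock lam s = μ • v) {c : Fin s} (hc : v c ≠ 0) :
    lam = μ ∧ (c : ℕ) + 1 = s := by
  have hpred : ∀ a b : Fin s, (b : ℕ) = a + 1 → v a = (μ - lam) * v b := by
    intro a b hab
    have := congrFun hv b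
    rw [vecMul_jordanBlock_apply_of_val_eq_succ v hab, Pi.smul_apply, smul_eq_mul] at this
    linarith
  by_cases hlam : lam = μ
  · refine ⟨hlam, ?_⟩
    by_contra hlast
    exact hc (by simpa [hlam] using hpred c ⟨c + 1, by omega⟩ rfl)
  · have hzero : ∀ n (c : Fin s), (c : ℕ) = n → v c = 0 := by
      intro n
      induction n with
      | zero =>
        intro c hc
        have := congrFun hv c
        rw [vecMul_jordanBlock_apply_of_val_eq_zero v hc, Pi.smul_apply, smul_eq_mul] at this
        have : (lam - μ) * v c = 0 := by linarith
        exact (mul_eq_zero.mp this).resolve_left (sub_ne_zero.mpr hlam)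
      | succ n ih =>
        intro c hc
        have := hpred ⟨n, by omega⟩ c hc
        rw [ih _ rfl] at this
        exact (mul_eq_zero.mp this.symm).resolve_left (sub_ne_zero.mpr (Ne.symm hlam))
    exact absurd (hzero _ c rfl) hc

end JordanBlock

section JordanMatrix

variable {l m : ℕ} {lam : Fin l → ℝ} {α : Fin l → ℕ} {r : (i : Fin l) → Fin (α i) → ℕ}

theorem exists_vecMul_jordanMatrix_eq_smul_mem {W : Submodule ℝ (JIdx l α r → ℝ)}
    (hW : ∀ v ∈ W, v ᵥ* jordanMatrix l lam α r ∈ W) (hW0 : W ≠ ⊥) :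
    ∃ μ : ℝ, ∃ w ∈ W, w ≠ 0 ∧ w ᵥ* jordanMatrix l lam α r = μ • w := by
  have hJ : aeval (jordanMatrix l lam α r)ᵀ
      (∏ p : (i : Fin l) × Fin (α i), (jordanBlock (lam p.1) (r p.1 p.2))ᵀ.charpoly) = 0 := by
    rw [jordanMatrix, blockDiagonal'_transpose, aeval_blockDiagonal'_prod_charpoly]
  simp only [← mulVec_transpose] at hW ⊢
  refine exists_mulVec_eq_smul_mem_of_aeval_eq_zero
    (monic_prod_of_monic _ _ fun p _ => charpoly_monic _) (Splits.prod fun p _ => ?_) hJ hW hW0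
  rw [charpoly_transpose, charpoly_jordanBlock]
  exact (Splits.X_sub_C _).pow _

theorem eq_and_val_add_one_eq_of_vecMul_jordanMatrix_eq_smul {μ : ℝ} {w : JIdx l α r → ℝ}
    (hw : w ᵥ* jordanMatrix l lam α r = μ • w) {x : JIdx l α r} (hx : w x ≠ 0) :
    lam x.1.1 = μ ∧ (x.2 : ℕ) + 1 = r x.1.1 x.1.2 := by
  obtain ⟨p, c⟩ := x
  refine eq_and_val_add_one_eq_of_vecMul_jordanBlock_eq_smul (fun c => w ⟨p, c⟩) ?_ hx
  funext c
  simpa [jordanMatrix, vecMul_blockDiagonal'_apply] using congrFun hw ⟨p, c⟩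

variable (hr : ∀ i k, 0 < r i k)

def lastIdx (i : Fin l) (k : Fin (α i)) : JIdx l α r :=
  ⟨⟨i, k⟩, ⟨r i k - 1, Nat.sub_lt (hr i k) Nat.one_pos⟩⟩

theorem lastIdx_injective (i : Fin l) : Function.Injective (lastIdx hr i) := by
  intro k k' h
  simpa [lastIdx] using congrArg Sigma.fst h

theorem mem_range_lastIdx_of_val_add_one_eq {x : JIdx l α r} (hx : (x.2 : ℕ) + 1 = r x.1.1 x.1.2) :
    x ∈ Set.range (lastIdx hr x.1.1) := by
  obtain ⟨⟨i, k⟩, c⟩ := x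
  simp only at hx
  exact ⟨k, by simp only [lastIdx, Sigma.mk.injEq, heq_eq_eq, true_and]; ext; simp; omega⟩

theorem single_lastIdx_vecMul_jordanMatrix (i : Fin l) (k : Fin (α i)) :
    Pi.single (lastIdx hr i k) 1 ᵥ* jordanMatrix l lam α r =
      lam i • Pi.single (lastIdx hr i k) (1 : ℝ) := by
  ext ⟨q, c⟩
  rw [single_one_vecMul, row_apply, jordanMatrix, lastIdx]
  rcases eq_or_ne (⟨i, k⟩ : (i : Fin l) × Fin (α i)) q with rfl | hq
  · rw [blockDiagonal'_apply_eq]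
    have : (c : ℕ) ≠ r i k - 1 + 1 := by have := c.isLt; simp only at this; omega
    simp [jordanBlock, Pi.single_apply, Fin.ext_iff, this]
  · rw [blockDiagonal'_apply_ne _ _ _ hq]
    simp [hq]

def lastVec (i : Fin l) (g : Fin (α i) → ℝ) : JIdx l α r → ℝ :=
  ∑ k, g k • Pi.single (lastIdx hr i k) 1

theorem lastVec_apply_lastIdx (i : Fin l) (g : Fin (α i) → ℝ) (k : Fin (α i)) :
    lastVec hr i g (lastIdx hr i k) = g k := by
  simp [lastVec, Finset.sum_apply, Pi.single_apply, (lastIdx_injective hr i).eq_iff]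

theorem lastVec_apply_of_notMem_range (i : Fin l) (g : Fin (α i) → ℝ) {x : JIdx l α r}
    (hx : x ∉ Set.range (lastIdx hr i)) : lastVec hr i g x = 0 := by
  simp only [Set.mem_range, not_exists] at hx
  simp [lastVec, Finset.sum_apply, Ne.symm (hx _)]

theorem lastVec_vecMul (B : Matrix (JIdx l α r) (Fin m) ℝ) (i : Fin l) (g : Fin (α i) → ℝ) :
    lastVec hr i g ᵥ* B = ∑ k, g k • lastRow hr B i k := by
  simp only [lastVec, sum_vecMul, smul_vecMul, single_one_vecMul]
  rfl

theorem lastVec_vecMul_jordanMatrix (i : Fin l) (g : Fin (α i) → ℝ) :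
    lastVec hr i g ᵥ* jordanMatrix l lam α r = lam i • lastVec hr i g := by
  simp only [lastVec, sum_vecMul, smul_vecMul, single_lastIdx_vecMul_jordanMatrix, Finset.smul_sum,
    smul_comm (lam i)]

theorem eq_lastVec_of_vecMul_jordanMatrix_eq_smul (hlam : Function.Injective lam) {μ : ℝ}
    {w : JIdx l α r → ℝ} (hw : w ᵥ* jordanMatrix l lam α r = μ • w) {x : JIdx l α r}
    (hx : w x ≠ 0) : w = lastVec hr x.1.1 fun k => w (lastIdx hr x.1.1 k) := by
  funext y
  by_cases hy : y ∈ Set.range (lastIdx hr x.1.1)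
  · obtain ⟨k, rfl⟩ := hy
    rw [lastVec_apply_lastIdx]
  · rw [lastVec_apply_of_notMem_range hr _ _ hy]
    by_contra hwy
    obtain ⟨hμ, hlast⟩ := eq_and_val_add_one_eq_of_vecMul_jordanMatrix_eq_smul hw hwy
    have hyx : y.1.1 = x.1.1 :=
      hlam (hμ.trans (eq_and_val_add_one_eq_of_vecMul_jordanMatrix_eq_smul hw hx).1.symm)
    exact hy (hyx ▸ mem_range_lastIdx_of_val_add_one_eq hr hlast)

variable {B : Matrix (JIdx l α r) (Fin m) ℝ}

theorem linearIndependent_lastRow_of_ctrlLeftKernel_eq_bot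
    (h : ctrlLeftKernel (jordanMatrix l lam α r) B = ⊥) (i : Fin l) :
    LinearIndependent ℝ (lastRow hr B i) := by
  refine Fintype.linearIndependent_iff.mpr fun g hg k => ?_
  have hw : lastVec hr i g ∈ ctrlLeftKernel (jordanMatrix l lam α r) B := by
    refine mem_ctrlLeftKernel.mpr fun j => ?_
    rw [← vecMul_vecMul, vecMul_pow_eq_pow_smul (lastVec_vecMul_jordanMatrix hr i g), smul_vecMul,
      lastVec_vecMul, hg, smul_zero]
  rw [← lastVec_apply_lastIdx hr i g k, (Submodule.eq_bot_iff _).mp h _ hw, Pi.zero_apply]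

theorem ctrlLeftKernel_eq_bot_of_linearIndependent_lastRow (hlam : Function.Injective lam)
    (h : ∀ i, LinearIndependent ℝ (lastRow hr B i)) :
    ctrlLeftKernel (jordanMatrix l lam α r) B = ⊥ := by
  by_contra hne
  obtain ⟨μ, w, hwW, hw0, hwJ⟩ :=
    exists_vecMul_jordanMatrix_eq_smul_mem (fun _ => vecMul_mem_ctrlLeftKernel) hne
  obtain ⟨x, hx⟩ := Function.ne_iff.mp hw0
  have hw := eq_lastVec_of_vecMul_jordanMatrix_eq_smul hr hlam hwJ hx
  have hB : w ᵥ* B = 0 := by simpa using mem_ctrlLeftKernel.mp hwW 0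
  rw [hw, lastVec_vecMul] at hB
  have hg := Fintype.linearIndependent_iff.mp (h x.1.1) _ hB
  exact hx (by rw [hw]; simp [lastVec, hg])

end JordanMatrix

/-- For `J` in Jordan normal form with distinct real eigenvalues,
the pair `(J, B̂)` is completely controllable iff for every eigenvalue the rows of
`B̂` aligned with the last rows of its Jordan blocks are linearly independent. -/
theorem stmt0 (l m : ℕ) (lam : Fin l → ℝ) (hlam : Function.Injective lam)
    (α : Fin l → ℕ) (r : (i : Fin l) → Fin (α i) → ℕ) (hr : ∀ i k, 0 < r i k)
    (Bhat : Matrix (JIdx l α r) (Fin m) ℝ) :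
    ctrlSubspace (jordanMatrix l lam α r) Bhat = ⊤ ↔
      ∀ i : Fin l, LinearIndependent ℝ (fun k : Fin (α i) => lastRow hr Bhat i k) := by
  rw [ctrlSubspace_eq_top_iff]
  exact ⟨linearIndependent_lastRow_of_ctrlLeftKernel_eq_bot hr,
    ctrlLeftKernel_eq_bot_of_linearIndependent_lastRow hr hlam⟩
end

section
/- Let J ∈ ℝ^{n×n} be in Jordan normal form with distinct real eigenvalues λ_1,…,λ_l, where λ_i has α_i Jordan blocks of sizes r_{i1},…,r_{iα_i}. Define B̂ ∈ ℝ^{n×m} as follows: every row of B̂ not aligned with the last row of a Jordan block is zero; for each i, if α_i ≥ m, choose indices β_{i1},…,β_{im} of blocks of λ_i whose sizes are the m largest (r_{iβ_{i1}} ≥ r_{iβ_{i2}} ≥ … are the m largest among r_{i1},…,r_{iα_i}) and set b_{r i β_{ij}} equal to the j-th standard basis row vector of ℝ^m for j = 1,…,m, all other last-row blocks of λ_i being zero; if α_i < m, set b_{rik} equal to the k-th standard basis row vector of ℝ^m for k = 1,…,α_i. Then this B̂ maximizes the dimension of the controllable subspace of (J, ·) over all matrices in ℝ^{n×m}. -/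
open Matrix

/-!
The controllable subspace of `(J, B)` is the smallest `J`-invariant subspace containing the column
space `W` of `B`. Its image in the generalized eigenspace of `λᵢ` is the invariant hull `C` of a
subspace of dimension `≤ m` under `Jᵢ`, and `ν = Jᵢ - λᵢ` is a nilpotent shift on each block.
Filtering `C` by `ν`, the layer `νᵗ C ⊓ ker ν` has dimension at most `m` (as `C ≤ W ⊔ ν C`) and at
most the number of blocks of size `> t`; summing over `t` bounds `dim C` by the total size of the
`m` largest blocks of `λᵢ`.

Conversely, if the `λᵢ`-part of a column of `B̂` is the last basis vector of a block, multiplying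
the column by `∏_{j ≠ i} (J - λⱼ)^N` leaves a vector of that block with nonzero last coordinate,
which is cyclic for the block. So the controllable subspace of `B̂` contains every block that `B̂`
selects, and these have exactly the total size above.
-/

namespace JordanControl

open Module Polynomial

section Hull

variable {K V : Type*} [Field K] [AddCommGroup V] [Module K V]

def invtHull (f : Module.End K V) (W : Submodule K V) : Submodule K V :=
  ⨆ j : ℕ, W.map (f ^ j)

variable (f : Module.End K V) (W : Submodule K V)

lemma map_pow_le_invtHull (j : ℕ) : W.map (f ^ j) ≤ invtHull f W :=
  le_iSup (fun j => W.map (f ^ j)) j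

lemma le_invtHull : W ≤ invtHull f W := by
  simpa [Module.End.one_eq_id] using map_pow_le_invtHull f W 0

lemma invtHull_le_comap : invtHull f W ≤ (invtHull f W).comap f := by
  refine iSup_le fun j => Submodule.map_le_iff_le_comap.mp ?_
  rw [← Submodule.map_comp, ← Module.End.mul_eq_comp, ← pow_succ']
  exact map_pow_le_invtHull f W (j + 1)

variable {f W} in
lemma invtHull_le {P : Submodule K V} (hW : W ≤ P) (hP : P ≤ P.comap f) : invtHull f W ≤ P :=
  iSup_le fun j => Submodule.map_le_iff_le_comap.mpr
    (hW.trans (Submodule.le_comap_pow_of_le_comap P hP j))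

lemma le_comap_sub_smul_one {P : Submodule K V} (hP : P ≤ P.comap f) (c : K) :
    P ≤ P.comap (f - c • 1) := fun _ hv =>
  P.sub_mem (hP hv) (P.smul_mem c hv)

lemma map_invtHull {V' : Type*} [AddCommGroup V'] [Module K V'] {f' : Module.End K V'}
    (g : V →ₗ[K] V') (h : g ∘ₗ f = f' ∘ₗ g) :
    (invtHull f W).map g = invtHull f' (W.map g) := by
  have hpow : ∀ j : ℕ, g ∘ₗ (f ^ j) = (f' ^ j) ∘ₗ g := fun j => by
    induction j with
    | zero => rfl
    | succ j ih =>
      rw [pow_succ, pow_succ, Module.End.mul_eq_comp, Module.End.mul_eq_comp,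
        ← LinearMap.comp_assoc, ih, LinearMap.comp_assoc, h, LinearMap.comp_assoc]
  simp only [invtHull, Submodule.map_iSup, ← Submodule.map_comp, hpow]

lemma invtHull_le_sup_map_sub_smul (c : K) :
    invtHull f W ≤ W ⊔ (invtHull f W).map (f - c • 1) := by
  refine invtHull_le le_sup_left fun v hv => ?_
  obtain ⟨w, hw, u, ⟨u', hu', rfl⟩, rfl⟩ := Submodule.mem_sup.mp hv
  have hcomm : f ((f - c • 1) u') = (f - c • 1) (f u') := by simp
  have hw' : f w = (f - c • 1) w + c • w := by simp
  rw [Submodule.mem_comap, map_add, hcomm, hw']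
  refine Submodule.add_mem _ (Submodule.add_mem _ ?_ ?_) ?_
  · exact Submodule.mem_sup_right (Submodule.mem_map_of_mem (le_invtHull f W hw))
  · exact Submodule.mem_sup_left (W.smul_mem c hw)
  · exact Submodule.mem_sup_right (Submodule.mem_map_of_mem (invtHull_le_comap f W hu'))

lemma invtHull_eq_iSup_lt_finrank [FiniteDimensional K V] :
    invtHull f W = ⨆ j ∈ Finset.range (finrank K V), W.map (f ^ j) := by
  refine le_antisymm (iSup_le fun j => ?_) (iSup₂_le fun j _ => map_pow_le_invtHull f W j)
  rw [f.pow_eq_aeval_mod_charpoly]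
  set q := X ^ j %ₘ f.charpoly
  rcases eq_or_ne q 0 with hq | hq
  · simp [hq]
  have hdeg : q.natDegree < finrank K V := by
    rw [← f.charpoly_natDegree]
    exact natDegree_lt_natDegree hq (degree_modByMonic_lt _ f.charpoly_monic)
  rintro _ ⟨w, hw, rfl⟩
  rw [aeval_eq_sum_range' hdeg, LinearMap.sum_apply]
  refine Submodule.sum_mem _ fun t ht => ?_
  exact Submodule.mem_iSup_of_mem t (Submodule.mem_iSup_of_mem ht
    (Submodule.smul_mem _ _ (Submodule.mem_map_of_mem hw)))

end Hull

section Finrank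

variable {K V : Type*} [Field K] [AddCommGroup V] [Module K V] [FiniteDimensional K V]

lemma finrank_map_add_finrank_inf_ker (g : Module.End K V) (p : Submodule K V) :
    finrank K (p.map g) + finrank K (p ⊓ LinearMap.ker g : Submodule K V) = finrank K p := by
  rw [← (g.domRestrict p).finrank_range_add_finrank_ker, LinearMap.range_domRestrict]
  congr 1
  rw [LinearMap.ker_domRestrict, ← top_inf_eq (Submodule.comap _ _),
    ← Submodule.comap_subtype_self p, ← Submodule.comap_inf]
  exact (Submodule.comapSubtypeEquivOfLe inf_le_left).finrank_eq.symm

lemma finrank_eq_sum_finrank_map_pow_inf_ker (g : Module.End K V) (n : ℕ) (p : Submodule K V)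
    (hp : p.map (g ^ n) = ⊥) :
    finrank K p =
      ∑ t ∈ Finset.range n, finrank K (p.map (g ^ t) ⊓ LinearMap.ker g : Submodule K V) := by
  induction n generalizing p with
  | zero => simpa [Module.End.one_eq_id] using hp
  | succ n ih =>
    have hshift : ∀ t : ℕ, (p.map g).map (g ^ t) = p.map (g ^ (t + 1)) := fun t => by
      rw [← Submodule.map_comp, ← Module.End.mul_eq_comp, pow_succ]
    rw [Finset.sum_range_succ', ← finrank_map_add_finrank_inf_ker g p,
      ih (p.map g) (by rw [hshift]; exact hp)]
    congr 1
    · exact Finset.sum_congr rfl fun t _ => by rw [hshift]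
    · rw [pow_zero, Module.End.one_eq_id, Submodule.map_id]

lemma finrank_invtHull_inf_ker_le (f : Module.End K V) (W : Submodule K V) (c : K) :
    finrank K (invtHull f W ⊓ LinearMap.ker (f - c • 1) : Submodule K V) ≤ finrank K W := by
  have h1 := finrank_map_add_finrank_inf_ker (f - c • 1) (invtHull f W)
  have h2 := Submodule.finrank_mono (invtHull_le_sup_map_sub_smul f W c)
  have h3 := Submodule.finrank_add_le_finrank_add_finrank W ((invtHull f W).map (f - c • 1))
  omega

end Finrank

section Coordinates

variable {K σ : Type*} [Field K]

def supportedOn (Q : Set σ) : Submodule K (σ → K) where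
  carrier := {v | ∀ q ∉ Q, v q = 0}
  add_mem' hv hw q hq := by simp [hv q hq, hw q hq]
  zero_mem' _ _ := rfl
  smul_mem' c _ hv q hq := by simp [hv q hq]

lemma finrank_supportedOn_range_le {τ : Type*} [Fintype τ] [Finite σ] (e : τ → σ) :
    finrank K (supportedOn (K := K) (Set.range e)) ≤ Fintype.card τ := by
  let L : supportedOn (K := K) (Set.range e) →ₗ[K] (τ → K) :=
    LinearMap.funLeft K K e ∘ₗ Submodule.subtype _
  have hL : Function.Injective L := fun v w hvw => Subtype.ext <| funext fun q => by
    by_cases hq : q ∈ Set.range e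
    · obtain ⟨t, rfl⟩ := hq
      exact congrFun hvw t
    · rw [v.2 q hq, w.2 q hq]
  simpa using LinearMap.finrank_le_finrank_of_injective hL

lemma card_le_finrank_of_single_mem [Fintype σ] [DecidableEq σ] (P : Submodule K (σ → K))
    (Q : Finset σ) (hQ : ∀ q ∈ Q, Pi.single q 1 ∈ P) : Q.card ≤ finrank K P := by
  have hli : LinearIndependent K ((Pi.basisFun K σ) ∘ ((↑) : Q → σ)) :=
    (Pi.basisFun K σ).linearIndependent.comp _ Subtype.val_injective
  have hspan : Submodule.span K (Set.range ((Pi.basisFun K σ) ∘ ((↑) : Q → σ))) ≤ P :=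
    Submodule.span_le.mpr (Set.range_subset_iff.mpr fun q => by simpa using hQ q q.2)
  simpa using (finrank_span_eq_card hli).symm.trans_le (Submodule.finrank_mono hspan)

end Coordinates

lemma finrank_le_sum_finrank_map {K V ι : Type*} [Field K] [AddCommGroup V] [Module K V]
    [Fintype ι] {V' : ι → Type*} [∀ i, AddCommGroup (V' i)] [∀ i, Module K (V' i)]
    [∀ i, FiniteDimensional K (V' i)] (π : ∀ i, V →ₗ[K] V' i)
    (hπ : ∀ v, (∀ i, π i v = 0) → v = 0) (P : Submodule K V) :
    finrank K P ≤ ∑ i, finrank K (P.map (π i)) := by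
  let L : P →ₗ[K] ∀ i, P.map (π i) :=
    LinearMap.pi fun i => ((π i).comp P.subtype).codRestrict _ fun v => Submodule.mem_map_of_mem v.2
  have hL : Function.Injective L := by
    refine (injective_iff_map_eq_zero L).mpr fun v hv => Subtype.ext (hπ v fun i => ?_)
    exact congrArg Subtype.val (congrFun hv i)
  simpa [Module.finrank_pi_fintype] using LinearMap.finrank_le_finrank_of_injective hL

lemma sum_min_card_filter_lt_le {κ : Type*} [Fintype κ] (s : κ → ℕ) (m N : ℕ)
    (hN : ∀ k, s k ≤ N) (S : Finset κ) (hS : min m (Fintype.card κ) ≤ S.card)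
    (hlargest : ∀ k ∉ S, ∀ j ∈ S, s k ≤ s j) :
    ∑ t ∈ Finset.range N, min m (Finset.univ.filter fun k => t < s k).card ≤ ∑ k ∈ S, s k := by
  have hlevel : ∀ t, min m (Finset.univ.filter fun k => t < s k).card ≤
      (S.filter fun k => t < s k).card := by
    intro t
    by_cases hall : ∀ j ∈ S, t < s j
    · rw [Finset.filter_true_of_mem hall]
      exact (min_le_min_left m (Finset.card_le_univ _)).trans hS
    · simp only [not_forall, not_lt] at hall
      obtain ⟨j, hjS, hj⟩ := hall
      refine (min_le_right _ _).trans (Finset.card_le_card fun k hk => ?_)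
      simp only [Finset.mem_filter, Finset.mem_univ, true_and] at hk ⊢
      exact ⟨by_contra fun hkS => by have := hlargest k hkS j hjS; omega, hk⟩
  calc _ ≤ ∑ t ∈ Finset.range N, (S.filter fun k => t < s k).card :=
        Finset.sum_le_sum fun t _ => hlevel t
    _ = ∑ k ∈ S, ((Finset.range N).filter fun t => t < s k).card := by
        simp only [Finset.card_filter]
        exact Finset.sum_comm
    _ = ∑ k ∈ S, s k := Finset.sum_congr rfl fun k _ => by
        have hrange : (Finset.range N).filter (· < s k) = Finset.range (s k) := by
          ext t
          simp only [Finset.mem_filter, Finset.mem_range]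
          have := hN k
          omega
        rw [hrange, Finset.card_range]

def lastIdx {n : ℕ} (h : 0 < n) : Fin n := ⟨n - 1, Nat.sub_lt h Nat.one_pos⟩

section BlockJordan

variable {κ : Type} [Fintype κ] [DecidableEq κ] (μ : κ → ℝ) (s : κ → ℕ)

abbrev BlockIdx : Type := (k : κ) × Fin (s k)

noncomputable def blockJordan : Module.End ℝ (BlockIdx s → ℝ) :=
  (Matrix.blockDiagonal' fun k => jordanBlock (μ k) (s k)).mulVecLin

lemma blockJordan_apply (v : BlockIdx s → ℝ) (k : κ) (x : Fin (s k)) :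
    blockJordan μ s v ⟨k, x⟩ =
      μ k * v ⟨k, x⟩ + if h : (x : ℕ) + 1 < s k then v ⟨k, ⟨x + 1, h⟩⟩ else 0 := by
  simp only [blockJordan, Matrix.mulVecLin_apply, Matrix.mulVec, dotProduct, Fintype.sum_sigma]
  rw [Finset.sum_eq_single k (fun k' _ hk' => Finset.sum_eq_zero fun y _ => by
    simp [Matrix.blockDiagonal'_apply_ne _ _ _ (Ne.symm hk')]) (by simp)]
  have hsplit : ∀ y : Fin (s k), jordanBlock (μ k) (s k) x y * v ⟨k, y⟩ =
      (if x = y then μ k * v ⟨k, y⟩ else 0) + if (y : ℕ) = x + 1 then v ⟨k, y⟩ else 0 := by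
    intro y
    simp only [jordanBlock, Matrix.of_apply, Fin.val_inj]
    split_ifs <;> simp_all
  simp only [Matrix.blockDiagonal'_apply_eq, hsplit, Finset.sum_add_distrib,
    Finset.sum_ite_eq, Finset.mem_univ, if_true]
  congr 1
  split_ifs with h
  · rw [Finset.sum_eq_single ⟨x + 1, h⟩ (fun y _ hy => if_neg fun h' => hy (Fin.ext h'))
      (by simp)]
    simp
  · exact Finset.sum_eq_zero fun y _ => if_neg fun (h' : (y : ℕ) = x + 1) => h (h' ▸ y.isLt)

variable {μ s}

lemma blockJordan_sub_smul_apply (c : ℝ) (v : BlockIdx s → ℝ) (k : κ) (x : Fin (s k)) :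
    (blockJordan μ s - c • 1) v ⟨k, x⟩ =
      (μ k - c) * v ⟨k, x⟩ + if h : (x : ℕ) + 1 < s k then v ⟨k, ⟨x + 1, h⟩⟩ else 0 := by
  simp only [LinearMap.sub_apply, LinearMap.smul_apply, Module.End.one_apply, Pi.sub_apply,
    Pi.smul_apply, smul_eq_mul, blockJordan_apply]
  ring

lemma blockJordan_sub_smul_pow_apply {c : ℝ} {k : κ} (hk : μ k = c) (t : ℕ) (v : BlockIdx s → ℝ)
    (x : Fin (s k)) :
    ((blockJordan μ s - c • 1) ^ t) v ⟨k, x⟩ =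
      if h : (x : ℕ) + t < s k then v ⟨k, ⟨x + t, h⟩⟩ else 0 := by
  induction t generalizing v with
  | zero => simp
  | succ t ih =>
    rw [pow_succ, Module.End.mul_apply, ih]
    by_cases h : (x : ℕ) + t < s k
    · rw [dif_pos h, blockJordan_sub_smul_apply, hk, sub_self, zero_mul, zero_add]
      by_cases h' : (x : ℕ) + t + 1 < s k
      · rw [dif_pos h', dif_pos (show (x : ℕ) + (t + 1) < s k from h')]
        rfl
      · rw [dif_neg h', dif_neg (show ¬(x : ℕ) + (t + 1) < s k from h')]
    · rw [dif_neg h, dif_neg (by omega)]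

lemma blockJordan_sub_smul_pow_apply_eq_zero {c : ℝ} {k : κ} (hk : μ k = c) {t : ℕ} (ht : s k ≤ t)
    (v : BlockIdx s → ℝ) (x : Fin (s k)) : ((blockJordan μ s - c • 1) ^ t) v ⟨k, x⟩ = 0 := by
  rw [blockJordan_sub_smul_pow_apply hk, dif_neg (by omega)]

lemma eq_zero_of_mem_ker_blockJordan_sub_smul {c : ℝ} {k : κ} (hk : μ k = c) {v : BlockIdx s → ℝ}
    (hv : v ∈ LinearMap.ker (blockJordan μ s - c • 1)) {x : Fin (s k)} (hx : (x : ℕ) ≠ 0) :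
    v ⟨k, x⟩ = 0 := by
  have h := congrFun (LinearMap.mem_ker.mp hv) ⟨k, ⟨x - 1, by omega⟩⟩
  rw [blockJordan_sub_smul_apply, hk, sub_self, zero_mul, zero_add,
    dif_pos (by simp only; omega)] at h
  simpa [Nat.sub_add_cancel (Nat.pos_of_ne_zero hx)] using h

lemma aeval_blockJordan_apply_eq_zero {k : κ} (p : ℝ[X]) (hp : (X - C (μ k)) ^ s k ∣ p)
    (v : BlockIdx s → ℝ) (x : Fin (s k)) : aeval (blockJordan μ s) p v ⟨k, x⟩ = 0 := by
  obtain ⟨q, rfl⟩ := hp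
  rw [map_mul, map_pow, map_sub, aeval_X, aeval_C, Algebra.algebraMap_eq_smul_one,
    Module.End.mul_apply]
  exact blockJordan_sub_smul_pow_apply_eq_zero rfl le_rfl _ _

lemma blockJordan_apply_last {k : κ} (hk : 0 < s k) (v : BlockIdx s → ℝ) :
    blockJordan μ s v ⟨k, lastIdx hk⟩ = μ k * v ⟨k, lastIdx hk⟩ := by
  rw [blockJordan_apply, dif_neg (by simp only [lastIdx]; omega), add_zero]

lemma aeval_blockJordan_apply_last {k : κ} (hk : 0 < s k) (p : ℝ[X]) (v : BlockIdx s → ℝ) :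
    aeval (blockJordan μ s) p v ⟨k, lastIdx hk⟩ = p.eval (μ k) * v ⟨k, lastIdx hk⟩ := by
  induction p using Polynomial.induction_on generalizing v with
  | C a => simp
  | add p q hp hq => simp [hp, hq, add_mul]
  | monomial n a ih =>
    rw [pow_succ, ← mul_assoc, map_mul, aeval_X, Module.End.mul_apply, ih,
      blockJordan_apply_last]
    simp only [eval_mul, eval_X]
    ring

lemma supportedOn_le_comap_blockJordan (A : Set κ) :
    supportedOn (Sigma.fst ⁻¹' A) ≤ (supportedOn (Sigma.fst ⁻¹' A)).comap (blockJordan μ s) := by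
  rintro v hv ⟨k, x⟩ hk
  rw [blockJordan_apply, hv _ hk]
  by_cases h : (x : ℕ) + 1 < s k
  · rw [dif_pos h, hv ⟨k, ⟨x + 1, h⟩⟩ hk]; ring
  · rw [dif_neg h]; ring

/-- The layers `(P ⊓ B).map νᵗ ⊓ ker ν`, `t < s k₀`, all contain `ν ^ (s k₀ - 1) w ≠ 0`, so `P ⊓ B`
has the full dimension `s k₀` of the block `B`. -/
lemma supportedOn_block_le_of_last_ne_zero {P : Submodule ℝ (BlockIdx s → ℝ)}
    (hP : P ≤ P.comap (blockJordan μ s)) {k₀ : κ} (h₀ : 0 < s k₀) {w : BlockIdx s → ℝ}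
    (hwP : w ∈ P) (hw : w ∈ supportedOn (Sigma.fst ⁻¹' {k₀})) (hlast : w ⟨k₀, lastIdx h₀⟩ ≠ 0) :
    supportedOn (Sigma.fst ⁻¹' {k₀}) ≤ P := by
  set B : Submodule ℝ (BlockIdx s → ℝ) := supportedOn (Sigma.fst ⁻¹' {k₀})
  set ν := blockJordan μ s - μ k₀ • 1
  set n := s k₀
  have hB : B ≤ B.comap ν := le_comap_sub_smul_one _ (supportedOn_le_comap_blockJordan _) _
  have hPB : P ⊓ B ≤ (P ⊓ B).comap ν := fun v hv =>
    ⟨le_comap_sub_smul_one _ hP _ hv.1, hB hv.2⟩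
  have hkill : ∀ v ∈ B, (ν ^ n) v = 0 := fun v hv => funext fun ⟨k, x⟩ => by
    by_cases hk : k = k₀
    · subst hk
      exact blockJordan_sub_smul_pow_apply_eq_zero rfl le_rfl v x
    · exact Submodule.le_comap_pow_of_le_comap _ hB n hv ⟨k, x⟩ hk
  have hlayer : ∀ t ∈ Finset.range n,
      1 ≤ finrank ℝ ((P ⊓ B).map (ν ^ t) ⊓ LinearMap.ker ν : Submodule ℝ _) := by
    intro t ht
    rw [Finset.mem_range] at ht
    refine Submodule.one_le_finrank_iff.mpr ((Submodule.ne_bot_iff _).mpr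
      ⟨(ν ^ (n - 1)) w, ⟨⟨(ν ^ (n - 1 - t)) w, ?_, ?_⟩, ?_⟩, ?_⟩)
    · exact Submodule.le_comap_pow_of_le_comap _ hPB _ ⟨hwP, hw⟩
    · rw [← Module.End.mul_apply, ← pow_add, Nat.add_sub_cancel' (by omega)]
    · change ν ((ν ^ (n - 1)) w) = 0
      rw [← Module.End.mul_apply, ← pow_succ', Nat.sub_add_cancel h₀]
      exact hkill w hw
    · intro h
      have h0 := congrFun h ⟨k₀, ⟨0, h₀⟩⟩
      rw [blockJordan_sub_smul_pow_apply rfl, dif_pos (by simp only; omega)] at h0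
      exact hlast (by simpa [lastIdx] using h0)
  have hfinrank : finrank ℝ B ≤ finrank ℝ (P ⊓ B : Submodule ℝ _) := calc
    finrank ℝ B ≤ n := by
      have h := finrank_supportedOn_range_le (K := ℝ) (Sigma.mk (β := fun k => Fin (s k)) k₀)
      rwa [Set.range_sigmaMk, Fintype.card_fin] at h
    _ = ∑ t ∈ Finset.range n, 1 := by simp
    _ ≤ _ := Finset.sum_le_sum hlayer
    _ = _ := (finrank_eq_sum_finrank_map_pow_inf_ker ν n _ (eq_bot_iff.mpr <| by
      rintro _ ⟨v, hv, rfl⟩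
      exact hkill v hv.2)).symm
  exact (Submodule.eq_of_le_of_finrank_le inf_le_right hfinrank) ▸ inf_le_left

lemma finrank_invtHull_blockJordan_const_le (c : ℝ) {m : ℕ} (W : Submodule ℝ (BlockIdx s → ℝ))
    (hW : finrank ℝ W ≤ m) :
    finrank ℝ (invtHull (blockJordan (fun _ => c) s) W) ≤
      ∑ t ∈ Finset.range (Finset.univ.sup s), min m (Finset.univ.filter fun k => t < s k).card := by
  set f := blockJordan (fun _ : κ => c) s
  set ν := f - c • 1
  set C := invtHull f W
  have hC : C ≤ C.comap ν := le_comap_sub_smul_one _ (invtHull_le_comap f W) c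
  have hkill : C.map (ν ^ Finset.univ.sup s) = ⊥ := eq_bot_iff.mpr <| by
    rintro _ ⟨v, -, rfl⟩
    exact funext fun ⟨k, x⟩ =>
      blockJordan_sub_smul_pow_apply_eq_zero rfl (Finset.le_sup (Finset.mem_univ k)) v x
  rw [finrank_eq_sum_finrank_map_pow_inf_ker ν _ C hkill]
  refine Finset.sum_le_sum fun t _ => le_min ?_ ?_
  · refine (Submodule.finrank_mono (inf_le_inf_right _ ?_)).trans
      ((finrank_invtHull_inf_ker_le f W c).trans hW)
    exact Submodule.map_le_iff_le_comap.mpr (Submodule.le_comap_pow_of_le_comap _ hC t)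
  · -- the `t`-th layer lives on the first coordinates of the blocks longer than `t`
    let e : {k // t < s k} → BlockIdx s := fun k => ⟨k, ⟨0, by omega⟩⟩
    rw [← Fintype.card_subtype]
    refine (Submodule.finrank_mono fun v hv => ?_).trans (finrank_supportedOn_range_le e)
    obtain ⟨⟨u, -, rfl⟩, hker⟩ := hv
    rintro ⟨k, x⟩ hq
    by_cases hx : (x : ℕ) = 0
    · refine blockJordan_sub_smul_pow_apply_eq_zero rfl (not_lt.mp fun hk => hq ⟨⟨k, hk⟩, ?_⟩) u x
      simp [e, Fin.ext_iff, hx]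
    · exact eq_zero_of_mem_ker_blockJordan_sub_smul rfl hker hx

lemma supportedOn_block_le_invtHull {W : Submodule ℝ (BlockIdx s → ℝ)} {v : BlockIdx s → ℝ}
    (hvW : v ∈ W) {k₀ : κ} (h₀ : 0 < s k₀) (hv : ∀ k ≠ k₀, μ k = μ k₀ → ∀ x, v ⟨k, x⟩ = 0)
    (hlast : v ⟨k₀, lastIdx h₀⟩ ≠ 0) :
    supportedOn (Sigma.fst ⁻¹' {k₀}) ≤ invtHull (blockJordan μ s) W := by
  set N := Finset.univ.sup s
  -- `p(J)` annihilates the generalized eigenspaces of the eigenvalues other than `μ k₀`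
  set p : ℝ[X] := ∏ c ∈ (Finset.univ.image μ).erase (μ k₀), (X - C c) ^ N
  have hw : aeval (blockJordan μ s) p v ∈ supportedOn (Sigma.fst ⁻¹' {k₀}) := by
    rintro ⟨k, x⟩ hk
    replace hk : k ≠ k₀ := hk
    by_cases hμ : μ k = μ k₀
    · have hvk : v ∈ supportedOn (Sigma.fst ⁻¹' {k}ᶜ) := by
        rintro ⟨k', y⟩ hk'
        obtain rfl : k' = k := by simpa using hk'
        exact hv k' hk hμ y
      exact aeval_apply_smul_mem_of_le_comap hvk p _ (supportedOn_le_comap_blockJordan _)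
        ⟨k, x⟩ (by simp)
    · have hmem : μ k ∈ (Finset.univ.image μ).erase (μ k₀) :=
        Finset.mem_erase.mpr ⟨hμ, Finset.mem_image_of_mem μ (Finset.mem_univ k)⟩
      have hdvd : (X - C (μ k)) ^ s k ∣ p :=
        (pow_dvd_pow _ (Finset.le_sup (Finset.mem_univ k))).trans
          (Finset.dvd_prod_of_mem (fun c => (X - C c) ^ N) hmem)
      exact aeval_blockJordan_apply_eq_zero p hdvd v x
  have hwlast : aeval (blockJordan μ s) p v ⟨k₀, lastIdx h₀⟩ ≠ 0 := by
    rw [aeval_blockJordan_apply_last, eval_prod]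
    simp only [eval_pow, eval_sub, eval_X, eval_C]
    refine mul_ne_zero (Finset.prod_ne_zero_iff.mpr fun c hc => pow_ne_zero _ ?_) hlast
    exact sub_ne_zero.mpr (Finset.ne_of_mem_erase hc).symm
  exact supportedOn_block_le_of_last_ne_zero (invtHull_le_comap _ W) h₀
    (aeval_apply_smul_mem_of_le_comap (le_invtHull _ W hvW) p _ (invtHull_le_comap _ W)) hw hwlast

end BlockJordan

lemma ctrlSubspace_eq_invtHull {ι : Type} [Fintype ι] [DecidableEq ι] {m : ℕ}
    (J : Matrix ι ι ℝ) (B : Matrix ι (Fin m) ℝ) :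
    ctrlSubspace J B = invtHull J.mulVecLin (LinearMap.range B.mulVecLin) := by
  rw [invtHull_eq_iSup_lt_finrank, Module.finrank_fintype_fun_eq_card]
  simp only [ctrlSubspace, Matrix.mulVecLin_mul, LinearMap.range_comp]
  congr! 3 with j
  exact congrArg (fun g => Submodule.map g _) (Matrix.toLin'_pow J j)

section JordanMatrix

variable {l : ℕ} (lam : Fin l → ℝ) (α : Fin l → ℕ) (r : (i : Fin l) → Fin (α i) → ℕ)

lemma mulVecLin_jordanMatrix :
    (jordanMatrix l lam α r).mulVecLin =
      blockJordan (fun p => lam p.1) (fun p : (i : Fin l) × Fin (α i) => r p.1 p.2) :=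
  rfl

noncomputable def eigenProj (i : Fin l) : (JIdx l α r → ℝ) →ₗ[ℝ] (BlockIdx (r i) → ℝ) :=
  LinearMap.funLeft ℝ ℝ fun q => ⟨⟨i, q.1⟩, q.2⟩

lemma eigenProj_comp_jordanMatrix (i : Fin l) :
    eigenProj α r i ∘ₗ (jordanMatrix l lam α r).mulVecLin =
      blockJordan (fun _ => lam i) (r i) ∘ₗ eigenProj α r i := by
  refine LinearMap.ext fun v => funext fun ⟨k, x⟩ => ?_
  simp only [LinearMap.comp_apply, eigenProj, LinearMap.funLeft_apply, mulVecLin_jordanMatrix,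
    blockJordan_apply]

theorem finrank_ctrlSubspace_jordanMatrix_le {m : ℕ} (S : ∀ i, Finset (Fin (α i)))
    (hS : ∀ i, min m (α i) ≤ (S i).card) (hlargest : ∀ i, ∀ k ∉ S i, ∀ j ∈ S i, r i k ≤ r i j)
    (B : Matrix (JIdx l α r) (Fin m) ℝ) :
    finrank ℝ (ctrlSubspace (jordanMatrix l lam α r) B) ≤ ∑ i, ∑ k ∈ S i, r i k := by
  rw [ctrlSubspace_eq_invtHull]
  refine (finrank_le_sum_finrank_map (eigenProj α r)
    (fun v hv => funext fun ⟨⟨i, k⟩, x⟩ => congrFun (hv i) ⟨k, x⟩) _).trans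
    (Finset.sum_le_sum fun i _ => ?_)
  rw [map_invtHull _ _ _ (eigenProj_comp_jordanMatrix lam α r i)]
  have hW : finrank ℝ ((LinearMap.range B.mulVecLin).map (eigenProj α r i)) ≤ m :=
    (Submodule.finrank_map_le _ _).trans ((LinearMap.finrank_range_le _).trans (by simp))
  exact (finrank_invtHull_blockJordan_const_le (lam i) _ hW).trans
    (sum_min_card_filter_lt_le _ _ _ (fun k => Finset.le_sup (Finset.mem_univ k)) _
      (by simpa using hS i) (hlargest i))

variable {lam α r}

theorem sum_le_finrank_ctrlSubspace_jordanMatrix (hlam : Function.Injective lam)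
    (hr : ∀ i k, 0 < r i k) {m : ℕ} (B : Matrix (JIdx l α r) (Fin m) ℝ)
    (S : ∀ i, Finset (Fin (α i)))
    (hcol : ∀ i, ∀ k ∈ S i, ∃ c : Fin m, ∀ q : JIdx l α r, q.1.1 = i →
      B q c = (Pi.single (⟨⟨i, k⟩, lastIdx (hr i k)⟩ : JIdx l α r) (1 : ℝ) : JIdx l α r → ℝ) q) :
    ∑ i, ∑ k ∈ S i, r i k ≤ finrank ℝ (ctrlSubspace (jordanMatrix l lam α r) B) := by
  have hcard : ∑ i, ∑ k ∈ S i, r i k =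
      ((Finset.univ.sigma S).sigma fun p => (Finset.univ : Finset (Fin (r p.1 p.2)))).card := by
    simp [Finset.card_sigma, Finset.sum_sigma]
  rw [hcard, ctrlSubspace_eq_invtHull]
  refine card_le_finrank_of_single_mem _ _ ?_
  rintro ⟨⟨i, k⟩, x⟩ hq
  obtain ⟨c, hc⟩ := hcol i k (by simpa using hq)
  have hcol' : ∀ q, q.1.1 = i → B.mulVecLin (Pi.single c 1) q =
      (Pi.single (⟨⟨i, k⟩, lastIdx (hr i k)⟩ : JIdx l α r) (1 : ℝ) : JIdx l α r → ℝ) q :=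
    fun q hq => by simpa [Matrix.mulVec_single_one] using hc q hq
  rw [mulVecLin_jordanMatrix]
  refine supportedOn_block_le_invtHull (LinearMap.mem_range_self B.mulVecLin (Pi.single c 1))
    (k₀ := ⟨i, k⟩) (hr i k) (fun p hp hlam' y => ?_) ?_ ?_
  · rw [hcol' _ (hlam hlam'), Pi.single_apply, if_neg fun h => hp (congrArg Sigma.fst h)]
  · rw [hcol' _ rfl, Pi.single_eq_same]
    exact one_ne_zero
  intro q hq
  rw [Pi.single_apply, if_neg]
  rintro rfl
  exact hq rfl

end JordanMatrix

section LastRows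

variable {l m : ℕ} {α : Fin l → ℕ} {r : (i : Fin l) → Fin (α i) → ℕ} (hr : ∀ i k, 0 < r i k)
  {Bhat : Matrix (JIdx l α r) (Fin m) ℝ}

lemma apply_eq_single_of_lastRow
    (hzero : ∀ p : JIdx l α r, ((p.2 : ℕ) + 1 ≠ r p.1.1 p.1.2) → ∀ c, Bhat p c = 0)
    {i : Fin l} {k : Fin (α i)} {c : Fin m}
    (hrow : ∀ k', lastRow hr Bhat i k' c = if k' = k then 1 else 0) (q : JIdx l α r)
    (hq : q.1.1 = i) :
    Bhat q c =
      (Pi.single (⟨⟨i, k⟩, lastIdx (hr i k)⟩ : JIdx l α r) (1 : ℝ) : JIdx l α r → ℝ) q := by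
  obtain ⟨⟨i', k'⟩, x⟩ := q
  obtain rfl : i' = i := hq
  by_cases hx : (x : ℕ) + 1 = r i' k'
  · obtain rfl : x = lastIdx (hr i' k') := Fin.ext (by simp only [lastIdx]; omega)
    change lastRow hr Bhat i' k' c = _
    rw [hrow, Pi.single_apply]
    by_cases hk : k' = k
    · subst hk
      simp
    · rw [if_neg hk, if_neg]
      intro h
      exact hk (by simpa using congrArg Sigma.fst h)
  · rw [hzero _ hx, Pi.single_apply, if_neg]
    intro h
    obtain ⟨h₁, h₂⟩ := Sigma.mk.inj_iff.mp h
    obtain rfl : k' = k := by simpa using h₁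
    have := congrArg Fin.val (eq_of_heq h₂)
    simp only [lastIdx] at this
    have := hr i' k'
    omega

lemma exists_finset_lastRow_eq_single {i : Fin l}
    (hbig : m ≤ α i → ∃ β : Fin m → Fin (α i),
      Function.Injective β ∧
      (∀ k : Fin (α i), k ∉ Set.range β →
        (∀ j : Fin m, r i k ≤ r i (β j)) ∧ lastRow hr Bhat i k = 0) ∧
      (∀ j : Fin m, lastRow hr Bhat i (β j) = fun c : Fin m => if c = j then (1 : ℝ) else 0))
    (hsmall : α i < m → ∀ k : Fin (α i),
      lastRow hr Bhat i k = fun c : Fin m => if (c : ℕ) = (k : ℕ) then (1 : ℝ) else 0) :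
    ∃ S : Finset (Fin (α i)), min m (α i) ≤ S.card ∧ (∀ k ∉ S, ∀ j ∈ S, r i k ≤ r i j) ∧
      ∀ k ∈ S, ∃ c : Fin m, ∀ k', lastRow hr Bhat i k' c = if k' = k then 1 else 0 := by
  by_cases hm : m ≤ α i
  · obtain ⟨β, hβ, hrest, hrowβ⟩ := hbig hm
    refine ⟨Finset.univ.image β, ?_, fun k hk j hj => ?_, fun k hk => ?_⟩
    · simp [Finset.card_image_of_injective _ hβ]
    · obtain ⟨j, -, rfl⟩ := Finset.mem_image.mp hj
      exact (hrest k (by simpa [Set.mem_range] using hk)).1 j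
    · obtain ⟨j, -, rfl⟩ := Finset.mem_image.mp hk
      refine ⟨j, fun k' => ?_⟩
      by_cases hk' : k' ∈ Set.range β
      · obtain ⟨j', rfl⟩ := hk'
        simp [hrowβ j', hβ.eq_iff, eq_comm]
      · rw [(hrest k' hk').2, if_neg fun h => hk' ⟨j, h.symm⟩]
        rfl
  · refine ⟨Finset.univ, by simp, by simp, fun k _ => ⟨⟨k, by omega⟩, fun k' => ?_⟩⟩
    simp [hsmall (not_le.mp hm) k', Fin.ext_iff, eq_comm]

end LastRows

end JordanControl

/-- The explicit choice of `B̂` (zero rows except at last rows of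
Jordan blocks; for `α_i ≥ m` the `m` largest blocks of `λ_i` get the standard basis
row vectors `e_1, …, e_m`, the remaining last rows of `λ_i` being zero; for `α_i < m`
the `k`-th block of `λ_i` gets `e_k`) maximizes the dimension of the controllable
subspace of `(J, ·)` over all matrices in `ℝ^{n×m}`. -/
theorem stmt4 (l m : ℕ) (lam : Fin l → ℝ) (hlam : Function.Injective lam)
    (α : Fin l → ℕ) (r : (i : Fin l) → Fin (α i) → ℕ) (hr : ∀ i k, 0 < r i k)
    (Bhat : Matrix (JIdx l α r) (Fin m) ℝ)
    -- every row of `B̂` not aligned with the last row of a Jordan block is zero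
    (hzero : ∀ p : JIdx l α r, ((p.2 : ℕ) + 1 ≠ r p.1.1 p.1.2) → ∀ c, Bhat p c = 0)
    -- case `α_i ≥ m`: there are indices `β_{i1}, …, β_{im}` of blocks of `λ_i` whose
    -- sizes are the `m` largest (in descending order), the corresponding last rows are
    -- the standard basis rows `e_1, …, e_m`, and all other last rows of `λ_i` are zero
    (hbig : ∀ i : Fin l, m ≤ α i → ∃ β : Fin m → Fin (α i),
      Function.Injective β ∧
      (∀ j j' : Fin m, j ≤ j' → r i (β j') ≤ r i (β j)) ∧
      (∀ k : Fin (α i), k ∉ Set.range β →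
        (∀ j : Fin m, r i k ≤ r i (β j)) ∧ lastRow hr Bhat i k = 0) ∧
      (∀ j : Fin m, lastRow hr Bhat i (β j) = fun c : Fin m => if c = j then (1 : ℝ) else 0))
    -- case `α_i < m`: the last row of the `k`-th block of `λ_i` is the `k`-th
    -- standard basis row vector of `ℝ^m`
    (hsmall : ∀ i : Fin l, α i < m → ∀ k : Fin (α i),
      lastRow hr Bhat i k = fun c : Fin m => if (c : ℕ) = (k : ℕ) then (1 : ℝ) else 0) :
    ∀ B' : Matrix (JIdx l α r) (Fin m) ℝ,
      Module.finrank ℝ (ctrlSubspace (jordanMatrix l lam α r) B') ≤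
        Module.finrank ℝ (ctrlSubspace (jordanMatrix l lam α r) Bhat) := by
  intro B'
  choose S hcard hlargest hrow using fun i =>
    JordanControl.exists_finset_lastRow_eq_single hr
      (fun hm => (hbig i hm).imp fun _ hβ => ⟨hβ.1, hβ.2.2⟩) (hsmall i)
  exact (JordanControl.finrank_ctrlSubspace_jordanMatrix_le lam α r S hcard hlargest B').trans
    (JordanControl.sum_le_finrank_ctrlSubspace_jordanMatrix hlam hr Bhat S fun i k hk =>
      (hrow i k hk).imp fun _ hc => JordanControl.apply_eq_single_of_lastRow hr hzero hc)
end

section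
/- Let A ∈ ℝ^{n×n}, B ∈ ℝ^{n×k}, C ∈ ℝ^{m×n}, and suppose 𝒱* ⊆ ℝ^n is the greatest element, with respect to inclusion, of the family of subspaces { V : V ⊆ Ker C and there exists F ∈ ℝ^{k×n} with (A+BF)V ⊆ V } (the maximal (A,B)-invariant subspace contained in Ker C). Then max over F ∈ ℝ^{k×n} of dim Ker Ω(C,F) equals dim 𝒱*: namely, dim Ker Ω(C,F) ≤ dim 𝒱* for every F ∈ ℝ^{k×n}, and there exists F₀ ∈ ℝ^{k×n} with Ker Ω(C,F₀) = 𝒱*, so that dim Ker Ω(C,F₀) = dim 𝒱*. -/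
open Matrix

/-- `Ker C = { x : Cx = 0 }` as a subspace of `ℝ^n`. -/
noncomputable def kerMat {m n : ℕ} (C : Matrix (Fin m) (Fin n) ℝ) :
    Submodule ℝ (Fin n → ℝ) :=
  LinearMap.ker C.mulVecLin

/-- `Im B = { Bu : u ∈ ℝ^k }` as a subspace of `ℝ^n`. -/
noncomputable def imMat {n k : ℕ} (B : Matrix (Fin n) (Fin k) ℝ) :
    Submodule ℝ (Fin n → ℝ) :=
  LinearMap.range B.mulVecLin

/-- The unobservable subspace `Ker Ω(C,F)`: the kernel of the observability matrix
obtained by stacking `C, C(A+BF), …, C(A+BF)^{n-1}`. -/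
noncomputable def unobs {n k m : ℕ} (A : Matrix (Fin n) (Fin n) ℝ)
    (B : Matrix (Fin n) (Fin k) ℝ) (C : Matrix (Fin m) (Fin n) ℝ)
    (F : Matrix (Fin k) (Fin n) ℝ) : Submodule ℝ (Fin n → ℝ) :=
  ⨅ j ∈ Finset.range n, LinearMap.ker (C * (A + B * F) ^ j).mulVecLin

/-!
For a fixed feedback `F`, `Ker Ω(C,F)` is the largest `(A + BF)`-invariant subspace of `Ker C`:
by Cayley–Hamilton every power `(A + BF)^j` is a combination of the powers below `n`, so
`x ∈ Ker Ω(C,F)` forces `C (A + BF)^j x = 0` for all `j`. Hence each `Ker Ω(C,F)` is an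
`(A,B)`-invariant subspace of `Ker C` and lies in `𝒱*`, while `𝒱*` lies in `Ker Ω(C,F₀)` for
any friend `F₀` of `𝒱*`.
-/

open Polynomial

namespace Matrix

variable {R ι κ : Type*} [CommRing R] [Nontrivial R] [Fintype ι] [DecidableEq ι]

theorem exists_pow_eq_sum_pow_lt_card (M : Matrix ι ι R) (j : ℕ) :
    ∃ c : ℕ → R, M ^ j = ∑ i ∈ Finset.range (Fintype.card ι), c i • M ^ i := by
  rcases (Fintype.card ι).eq_zero_or_pos with hι | hι
  · have : IsEmpty ι := Fintype.card_eq_zero_iff.mp hι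
    exact ⟨0, Subsingleton.elim _ _⟩
  have hχ : M.charpoly ≠ 1 := fun h ↦ by
    have := M.charpoly_natDegree_eq_dim
    rw [h, natDegree_one] at this
    omega
  refine ⟨(X ^ j %ₘ M.charpoly).coeff, ?_⟩
  rw [M.pow_eq_aeval_mod_charpoly j, aeval_eq_sum_range']
  simpa using natDegree_modByMonic_lt _ M.charpoly_monic hχ

theorem mul_pow_mulVec_eq_zero_of_forall_lt (M : Matrix ι ι R) (C : Matrix κ ι R) {x : ι → R}
    (hx : ∀ j < Fintype.card ι, (C * M ^ j) *ᵥ x = 0) (j : ℕ) : (C * M ^ j) *ᵥ x = 0 := by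
  obtain ⟨c, hc⟩ := M.exists_pow_eq_sum_pow_lt_card j
  simp only [hc, Matrix.mul_sum, Matrix.mul_smul, Matrix.sum_mulVec, Matrix.smul_mulVec]
  exact Finset.sum_eq_zero fun i hi ↦ by rw [hx i (Finset.mem_range.mp hi), smul_zero]

end Matrix

section Unobservable

variable {n k m : ℕ} (A : Matrix (Fin n) (Fin n) ℝ) (B : Matrix (Fin n) (Fin k) ℝ)
  (C : Matrix (Fin m) (Fin n) ℝ) (F : Matrix (Fin k) (Fin n) ℝ)

theorem mem_unobs_iff {x : Fin n → ℝ} :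
    x ∈ unobs A B C F ↔ ∀ j, (C * (A + B * F) ^ j) *ᵥ x = 0 := by
  simp only [unobs, Submodule.mem_iInf, Finset.mem_range, LinearMap.mem_ker, mulVecLin_apply]
  exact ⟨fun h ↦ mul_pow_mulVec_eq_zero_of_forall_lt _ _ (by simpa using h), fun h j _ ↦ h j⟩

theorem isGreatest_unobs :
    IsGreatest {V : Submodule ℝ (Fin n → ℝ) | V ≤ kerMat C ∧
      Submodule.map (A + B * F).mulVecLin V ≤ V} (unobs A B C F) := by
  refine ⟨⟨fun x hx ↦ by simpa [kerMat] using (mem_unobs_iff A B C F).mp hx 0, ?_⟩, ?_⟩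
  · rintro _ ⟨x, hx, rfl⟩
    rw [SetLike.mem_coe, mem_unobs_iff] at hx
    rw [mem_unobs_iff]
    intro j
    rw [mulVecLin_apply, mulVec_mulVec, Matrix.mul_assoc, ← pow_succ]
    exact hx (j + 1)
  · rintro V ⟨hVC, hVinv⟩ x hx
    have hpow : ∀ j, ((A + B * F) ^ j) *ᵥ x ∈ V := by
      intro j
      induction j with
      | zero => simpa using hx
      | succ j ih =>
        rw [pow_succ', ← mulVec_mulVec]
        exact hVinv ⟨_, ih, rfl⟩
    rw [mem_unobs_iff]
    intro j
    rw [← mulVec_mulVec]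
    exact hVC (hpow j)

end Unobservable

/-- If `𝒱*` is the greatest (A,B)-invariant subspace contained in
`Ker C`, then `max_F dim Ker Ω(C,F) = dim 𝒱*`: every `F` satisfies
`dim Ker Ω(C,F) ≤ dim 𝒱*`, and some `F₀` achieves `Ker Ω(C,F₀) = 𝒱*`, hence
`dim Ker Ω(C,F₀) = dim 𝒱*`. -/
theorem stmt11 (n k m : ℕ) (A : Matrix (Fin n) (Fin n) ℝ)
    (B : Matrix (Fin n) (Fin k) ℝ) (C : Matrix (Fin m) (Fin n) ℝ)
    (Vstar : Submodule ℝ (Fin n → ℝ))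
    (hVstar : IsGreatest {V : Submodule ℝ (Fin n → ℝ) | V ≤ kerMat C ∧
      ∃ F : Matrix (Fin k) (Fin n) ℝ, Submodule.map (A + B * F).mulVecLin V ≤ V} Vstar) :
    (∀ F : Matrix (Fin k) (Fin n) ℝ,
        Module.finrank ℝ (unobs A B C F) ≤ Module.finrank ℝ Vstar) ∧
    ∃ F₀ : Matrix (Fin k) (Fin n) ℝ, unobs A B C F₀ = Vstar ∧
      Module.finrank ℝ (unobs A B C F₀) = Module.finrank ℝ Vstar := by
  have unobs_le : ∀ F, unobs A B C F ≤ Vstar := fun F ↦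
    hVstar.2 ⟨(isGreatest_unobs A B C F).1.1, F, (isGreatest_unobs A B C F).1.2⟩
  obtain ⟨hVker, F₀, hF₀⟩ := hVstar.1
  have hF₀_eq : unobs A B C F₀ = Vstar :=
    (unobs_le F₀).antisymm ((isGreatest_unobs A B C F₀).2 ⟨hVker, hF₀⟩)
  exact ⟨fun F ↦ Submodule.finrank_mono (unobs_le F), F₀, hF₀_eq, by rw [hF₀_eq]⟩
end

section
/- Let A ∈ ℝ^{n×n}, B ∈ ℝ^{n×k}, C ∈ ℝ^{m×n}, and suppose 𝒱* ⊆ ℝ^n is the greatest element, with respect to inclusion, of the family of subspaces { V : V ⊆ Ker C and there exists F ∈ ℝ^{k×n} with (A+BF)V ⊆ V }. Then a matrix F ∈ ℝ^{k×n} maximizes dim Ker Ω(C,F) over all matrices in ℝ^{k×n} if and only if F is a friend of 𝒱*, i.e., (A+BF)𝒱* ⊆ 𝒱*. -/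
open Matrix

/-!
By Cayley–Hamilton, `Ker Ω(C,F)` is the largest `(A+BF)`-invariant subspace of `Ker C`. Hence
every unobservable subspace lies in `𝒱*`, with equality exactly when `F` is a friend of `𝒱*`.
Friends exist, so the maximal value of `dim Ker Ω(C,·)` is `dim 𝒱*`, attained precisely by the
friends of `𝒱*`.
-/

open Polynomial

theorem Matrix.mulVec_pow_eq_zero_of_forall_lt_card {R ι κ : Type*} [CommRing R] [Nontrivial R]
    [Fintype ι] [DecidableEq ι] (M : Matrix ι ι R) (C : Matrix κ ι R) (x : ι → R)
    (h : ∀ j < Fintype.card ι, (C * M ^ j) *ᵥ x = 0) (j : ℕ) : (C * M ^ j) *ᵥ x = 0 := by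
  rcases isEmpty_or_nonempty ι with hι | hι
  · rw [Subsingleton.elim x 0, mulVec_zero]
  have hdeg : (X ^ j %ₘ M.charpoly).natDegree < Fintype.card ι := by
    rw [← M.charpoly_natDegree_eq_dim]
    refine natDegree_modByMonic_lt _ M.charpoly_monic fun h1 => ?_
    simpa [h1] using (Fintype.card_pos (α := ι)).trans_eq M.charpoly_natDegree_eq_dim.symm
  rw [M.pow_eq_aeval_mod_charpoly, aeval_eq_sum_range' hdeg, Matrix.mul_sum, Matrix.sum_mulVec]
  refine Finset.sum_eq_zero fun i hi => ?_
  rw [Matrix.mul_smul, Matrix.smul_mulVec, h i (Finset.mem_range.mp hi), smul_zero]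

section Unobservable

variable {n k m : ℕ} (A : Matrix (Fin n) (Fin n) ℝ) (B : Matrix (Fin n) (Fin k) ℝ)
  (C : Matrix (Fin m) (Fin n) ℝ) (F : Matrix (Fin k) (Fin n) ℝ)

theorem unobs_le_kerMat : unobs A B C F ≤ kerMat C := fun x hx => by
  simpa [kerMat] using (mem_unobs_iff A B C F).1 hx 0

theorem map_unobs_le : Submodule.map (A + B * F).mulVecLin (unobs A B C F) ≤ unobs A B C F := by
  rintro _ ⟨x, hx, rfl⟩
  rw [SetLike.mem_coe, mem_unobs_iff] at hx
  rw [mem_unobs_iff]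
  intro j
  rw [mulVecLin_apply, mulVec_mulVec, Matrix.mul_assoc, ← pow_succ]
  exact hx (j + 1)

theorem le_unobs {V : Submodule ℝ (Fin n → ℝ)} (hVC : V ≤ kerMat C)
    (hV : Submodule.map (A + B * F).mulVecLin V ≤ V) : V ≤ unobs A B C F := by
  intro x hx
  have hpow : ∀ j, ((A + B * F) ^ j) *ᵥ x ∈ V := by
    intro j
    induction j with
    | zero => simpa using hx
    | succ j ih =>
      rw [pow_succ', ← mulVec_mulVec]
      exact hV ⟨_, ih, rfl⟩
  rw [mem_unobs_iff]
  intro j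
  simpa [kerMat, mulVec_mulVec] using hVC (hpow j)

end Unobservable

/-- (Paper's Proposition 2.) If `𝒱*` is the greatest
(A,B)-invariant subspace contained in `Ker C`, then `F` maximizes
`dim Ker Ω(C,·)` over `ℝ^{k×n}` iff `F` is a friend of `𝒱*`, i.e.
`(A+BF)𝒱* ⊆ 𝒱*`. -/
theorem stmt12 (n k m : ℕ) (A : Matrix (Fin n) (Fin n) ℝ)
    (B : Matrix (Fin n) (Fin k) ℝ) (C : Matrix (Fin m) (Fin n) ℝ)
    (F : Matrix (Fin k) (Fin n) ℝ)
    (Vstar : Submodule ℝ (Fin n → ℝ))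
    (hVstar : IsGreatest {V : Submodule ℝ (Fin n → ℝ) | V ≤ kerMat C ∧
      ∃ K : Matrix (Fin k) (Fin n) ℝ, Submodule.map (A + B * K).mulVecLin V ≤ V} Vstar) :
    (∀ F' : Matrix (Fin k) (Fin n) ℝ,
        Module.finrank ℝ (unobs A B C F') ≤ Module.finrank ℝ (unobs A B C F)) ↔
      Submodule.map (A + B * F).mulVecLin Vstar ≤ Vstar := by
  obtain ⟨⟨hVker, K, hK⟩, hVmax⟩ := hVstar
  have unobs_le : ∀ F', unobs A B C F' ≤ Vstar := fun F' =>
    hVmax ⟨unobs_le_kerMat A B C F', F', map_unobs_le A B C F'⟩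
  have unobs_eq_of_friend : ∀ F', Submodule.map (A + B * F').mulVecLin Vstar ≤ Vstar →
      unobs A B C F' = Vstar := fun F' hF' =>
    le_antisymm (unobs_le F') (le_unobs A B C F' hVker hF')
  constructor
  · intro hmax
    have hrank : Module.finrank ℝ Vstar ≤ Module.finrank ℝ (unobs A B C F) :=
      unobs_eq_of_friend K hK ▸ hmax K
    rw [← Submodule.eq_of_le_of_finrank_le (unobs_le F) hrank]
    exact map_unobs_le A B C F
  · intro hF F'
    rw [unobs_eq_of_friend F hF]
    exact Submodule.finrank_mono (unobs_le F')
end
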